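/- Let H be a real Hilbert space, 𝒞 ⊆ H a nonempty closed convex set, 𝔸 : H → H a bounded symmetric coercive linear operator, T > 0, and σ₀ ∈ H. Let g_n → g strongly in L²(0,T;H) and let σ_n : [0,T] → H be H¹(0,T;H)-curves with σ_n(0) = σ₀ whose derivatives σ_n' converge weakly in L²(0,T;H) to some v. Assume that for each n: σ_n(t) ∈ 𝒞 for almost every t ∈ (0,T), and for every τ ∈ L²(0,T;H) with τ(t) ∈ 𝒞 for almost every t one has ∫₀ᵀ ⟪𝔸σ_n'(t) − g_n(t), τ(t) − σ_n(t)⟫ dt ≥ 0. Then the curve σ(t) := σ₀ + ∫₀ᵗ v(s) ds satisfies: σ(t) ∈ 𝒞 for almost every t ∈ (0,T), and for every τ ∈ L²(0,T;H) with τ(t) ∈ 𝒞 for almost every t, ∫₀ᵀ ⟪𝔸v(t) − g(t), τ(t) − σ(t)⟫ dt ≥ 0. (Weak closedness of reduced solutions of the quasi-static evolution variational inequality.) -/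

import Mathlib

open RealInnerProductSpace MeasureTheory

/-- `σ : [0,T] → H` is an `H¹(0,T;H)`-curve with derivative `σ'`: the derivative is
Bochner measurable and square integrable on `(0,T)`, and
`σ(t) = σ(0) + ∫₀ᵗ σ'(s) ds` for all `t ∈ [0,T]`. -/
def IsH1Curve {H : Type*} [NormedAddCommGroup H] [NormedSpace ℝ H] [CompleteSpace H]
    (T : ℝ) (σ σ' : ℝ → H) : Prop :=
  MemLp σ' 2 (volume.restrict (Set.Ioo 0 T)) ∧
    ∀ t ∈ Set.Icc 0 T, σ t = σ 0 + ∫ s in (0:ℝ)..t, σ' s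

/-!
Testing `σₙ' ⇀ v` against `𝟙_(0,t) y` gives `σₙ(t) ⇀ σ(t)` in `H` for every `t`. Closed convex sets
are weakly closed, which gives feasibility; together with the uniform bound that Banach–Steinhaus
gives for a weakly convergent sequence, it also gives `σₙ ⇀ σ` in `L²(0,T;H)`. In the variational
inequality every term then passes to the limit as a pairing of a weakly and a strongly convergent
sequence, except `∫⟪Aσₙ', σₙ⟫`. By the energy identity (Fubini on the triangle `s < t`) that term
equals `½⟪Aσₙ(T), σₙ(T)⟫ - ½⟪Aσ₀, σ₀⟫`, a convex function of `σₙ(T)`, hence weakly lower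
semicontinuous along `σₙ(T) ⇀ σ(T)`.
-/

open Set Filter Topology

section L2

variable {α H : Type*} [MeasurableSpace α] {μ : Measure α}
  [NormedAddCommGroup H] [InnerProductSpace ℝ H]

theorem MeasureTheory.MemLp.integral_inner_eq_inner_toLp {f g : α → H} (hf : MemLp f 2 μ)
    (hg : MemLp g 2 μ) : ∫ a, ⟪f a, g a⟫ ∂μ = ⟪hf.toLp f, hg.toLp g⟫ := by
  rw [L2.inner_def]
  refine integral_congr_ae ?_
  filter_upwards [hf.coeFn_toLp, hg.coeFn_toLp] with a hfa hga
  rw [hfa, hga]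

theorem MeasureTheory.MemLp.integrable_inner {f g : α → H} (hf : MemLp f 2 μ)
    (hg : MemLp g 2 μ) : Integrable (fun a => ⟪f a, g a⟫) μ := by
  refine (L2.integrable_inner (𝕜 := ℝ) (hf.toLp f) (hg.toLp g)).congr ?_
  filter_upwards [hf.coeFn_toLp, hg.coeFn_toLp] with a hfa hga
  rw [hfa, hga]

theorem MeasureTheory.MemLp.norm_toLp_sq {f : α → H} (hf : MemLp f 2 μ) :
    ‖hf.toLp f‖ ^ 2 = ∫ a, ‖f a‖ ^ 2 ∂μ := by
  simp_rw [← real_inner_self_eq_norm_sq]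
  exact (hf.integral_inner_eq_inner_toLp hf).symm

theorem abs_integral_inner_le_sqrt_mul_sqrt {f g : α → H} (hf : MemLp f 2 μ) (hg : MemLp g 2 μ) :
    |∫ a, ⟪f a, g a⟫ ∂μ| ≤ √(∫ a, ‖f a‖ ^ 2 ∂μ) * √(∫ a, ‖g a‖ ^ 2 ∂μ) := by
  rw [hf.integral_inner_eq_inner_toLp hg, ← hf.norm_toLp_sq, ← hg.norm_toLp_sq,
    Real.sqrt_sq (norm_nonneg _), Real.sqrt_sq (norm_nonneg _)]
  exact abs_real_inner_le_norm _ _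

theorem integral_norm_le_sqrt_mul_sqrt {E : Type*} [NormedAddCommGroup E] [IsFiniteMeasure μ]
    {f : α → E} (hf : MemLp f 2 μ) :
    ∫ a, ‖f a‖ ∂μ ≤ √(μ.real univ) * √(∫ a, ‖f a‖ ^ 2 ∂μ) := by
  have h := abs_integral_inner_le_sqrt_mul_sqrt (memLp_const (1 : ℝ)) hf.norm
  simp only [RCLike.inner_apply, conj_trivial, norm_one, one_pow, integral_const, smul_eq_mul,
    mul_one, norm_norm] at h
  exact (le_abs_self _).trans h

def WeaklyTendstoL2 (μ : Measure α) (x : ℕ → α → H) (xlim : α → H) : Prop :=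
  ∀ h : α → H, MemLp h 2 μ →
    Tendsto (fun n => ∫ a, ⟪x n a, h a⟫ ∂μ) atTop (𝓝 (∫ a, ⟪xlim a, h a⟫ ∂μ))

namespace WeaklyTendstoL2

variable {x : ℕ → α → H} {xlim : α → H}

theorem exists_integral_norm_sq_le [CompleteSpace H] (hw : WeaklyTendstoL2 μ x xlim)
    (hx : ∀ n, MemLp (x n) 2 μ) : ∃ C, ∀ n, ∫ a, ‖x n a‖ ^ 2 ∂μ ≤ C := by
  let Φ : ℕ → Lp H 2 μ →L[ℝ] ℝ := fun n => innerSL ℝ ((hx n).toLp (x n))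
  have hΦ : ∀ n (h : Lp H 2 μ), Φ n h = ∫ a, ⟪x n a, h a⟫ ∂μ := fun n h => by
    rw [(hx n).integral_inner_eq_inner_toLp (Lp.memLp h), Lp.toLp_coeFn]
    rfl
  have hbdd : ∀ h : Lp H 2 μ, ∃ C, ∀ n, ‖Φ n h‖ ≤ C := fun h => by
    obtain ⟨C, hC⟩ := ((hw h (Lp.memLp h)).norm).bddAbove_range
    exact ⟨C, fun n => (hΦ n h).symm ▸ hC ⟨n, rfl⟩⟩
  obtain ⟨C, hC⟩ := banach_steinhaus hbdd
  refine ⟨C ^ 2, fun n => ?_⟩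
  rw [← (hx n).norm_toLp_sq, ← innerSL_apply_norm ℝ]
  exact pow_le_pow_left₀ (norm_nonneg _) (hC n) 2

theorem tendsto_integral_inner_of_tendsto [CompleteSpace H] (hw : WeaklyTendstoL2 μ x xlim)
    (hx : ∀ n, MemLp (x n) 2 μ) {g : ℕ → α → H} {glim : α → H} (hg : ∀ n, MemLp (g n) 2 μ)
    (hglim : MemLp glim 2 μ)
    (hgs : Tendsto (fun n => ∫ a, ‖g n a - glim a‖ ^ 2 ∂μ) atTop (𝓝 0)) :
    Tendsto (fun n => ∫ a, ⟪g n a, x n a⟫ ∂μ) atTop (𝓝 (∫ a, ⟪glim a, xlim a⟫ ∂μ)) := by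
  obtain ⟨C, hC⟩ := hw.exists_integral_norm_sq_le hx
  have hd : ∀ n, MemLp (fun a => g n a - glim a) 2 μ := fun n => (hg n).sub hglim
  have hsplit : ∀ n, ∫ a, ⟪g n a, x n a⟫ ∂μ =
      ∫ a, ⟪g n a - glim a, x n a⟫ ∂μ + ∫ a, ⟪x n a, glim a⟫ ∂μ := fun n => by
    rw [← integral_add ((hd n).integrable_inner (hx n)) ((hx n).integrable_inner hglim)]
    simp only [inner_sub_left, real_inner_comm (glim _), sub_add_cancel]
  have hsmall : Tendsto (fun n => ∫ a, ⟪g n a - glim a, x n a⟫ ∂μ) atTop (𝓝 0) := by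
    have hbound : Tendsto (fun n => √(∫ a, ‖g n a - glim a‖ ^ 2 ∂μ) * √C) atTop (𝓝 0) := by
      simpa using (hgs.sqrt).mul_const √C
    refine squeeze_zero_norm (fun n => ?_) hbound
    exact (abs_integral_inner_le_sqrt_mul_sqrt (hd n) (hx n)).trans
      (mul_le_mul_of_nonneg_left (Real.sqrt_le_sqrt (hC n)) (Real.sqrt_nonneg _))
  simp_rw [hsplit, real_inner_comm (xlim _)]
  simpa using hsmall.add (hw glim hglim)

theorem of_ae_tendsto_inner [IsFiniteMeasure μ] {B : ℝ}
    (hx : ∀ n, AEStronglyMeasurable (x n) μ) (hB : ∀ n, ∀ᵐ a ∂μ, ‖x n a‖ ≤ B)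
    (hlim : ∀ᵐ a ∂μ, ∀ y, Tendsto (fun n => ⟪x n a, y⟫) atTop (𝓝 ⟪xlim a, y⟫)) :
    WeaklyTendstoL2 μ x xlim := by
  intro h hh
  refine tendsto_integral_of_dominated_convergence (fun a => B * ‖h a‖)
    (fun n => (hx n).inner hh.aestronglyMeasurable) ((hh.integrable one_le_two).norm.const_mul B)
    (fun n => ?_) ?_
  · filter_upwards [hB n] with a ha
    exact (norm_inner_le_norm _ _).trans (mul_le_mul_of_nonneg_right ha (norm_nonneg _))
  · filter_upwards [hlim] with a ha
    exact ha (h a)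

end WeaklyTendstoL2

end L2

section Hilbert
variable {H : Type*} [NormedAddCommGroup H] [InnerProductSpace ℝ H]

theorem Convex.mem_of_tendsto_inner [CompleteSpace H] {C : Set H} (hconv : Convex ℝ C)
    (hclosed : IsClosed C) {x : ℕ → H} {xlim : H} (hx : ∀ n, x n ∈ C)
    (hlim : ∀ y, Tendsto (fun n => ⟪x n, y⟫) atTop (𝓝 ⟪xlim, y⟫)) : xlim ∈ C := by
  by_contra hxlim
  obtain ⟨φ, u, hφxlim, hφC⟩ := geometric_hahn_banach_point_closed hconv hclosed hxlim
  have hφ : ∀ z, φ z = ⟪z, (InnerProductSpace.toDual ℝ H).symm φ⟫ := fun z => by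
    rw [real_inner_comm, InnerProductSpace.toDual_symm_apply]
  have hφlim : Tendsto (fun n => φ (x n)) atTop (𝓝 (φ xlim)) := by
    simpa only [hφ] using hlim _
  exact hφxlim.not_ge (ge_of_tendsto hφlim (Eventually.of_forall fun n => (hφC _ (hx n)).le))

theorem ContinuousLinearMap.IsPositive.two_mul_inner_sub_le {A : H →L[ℝ] H} (hA : A.IsPositive)
    (x y : H) : 2 * ⟪x, A y⟫ - ⟪A y, y⟫ ≤ ⟪A x, x⟫ := by
  have h := hA.toLinearMap.inner_nonneg_left (x - y)
  simp only [ContinuousLinearMap.coe_coe, map_sub, inner_sub_left, inner_sub_right] at h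
  linarith [hA.inner_left_eq_inner_right x y, real_inner_comm (A y) x]

end Hilbert

theorem integral_integral_Ioo_swap_triangle {E : Type*} [NormedAddCommGroup E] [NormedSpace ℝ E]
    {a b : ℝ} {K : ℝ → ℝ → E}
    (hK : Integrable (Function.uncurry K)
      ((volume.restrict (Ioo a b)).prod (volume.restrict (Ioo a b)))) :
    ∫ t in Ioo a b, ∫ s in Ioo a t, K t s = ∫ s in Ioo a b, ∫ t in Ioo s b, K t s := by
  set K' : ℝ → ℝ → E := fun t s => (Iio t).indicator (K t) s
  have hK' : Integrable (Function.uncurry K')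
      ((volume.restrict (Ioo a b)).prod (volume.restrict (Ioo a b))) := by
    have hK'_eq : Function.uncurry K' =
        {p : ℝ × ℝ | p.2 < p.1}.indicator (Function.uncurry K) := by
      ext ⟨t, s⟩; simp [K', indicator_apply]
    rw [hK'_eq]
    exact hK.indicator (measurableSet_lt measurable_snd measurable_fst)
  have hinner_s : ∀ t ∈ Ioo a b, ∫ s in Ioo a b, K' t s = ∫ s in Ioo a t, K t s := by
    intro t ht
    rw [integral_indicator measurableSet_Iio, Measure.restrict_restrict measurableSet_Iio,
      Iio_inter_Ioo, min_eq_left ht.2.le]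
  have hinner_t : ∀ s ∈ Ioo a b, ∫ t in Ioo a b, K' t s = ∫ t in Ioo s b, K t s := by
    intro s hs
    have hK's : (fun t => K' t s) = (Ioi s).indicator (fun t => K t s) := by
      ext t; simp [K', indicator_apply]
    rw [hK's, integral_indicator measurableSet_Ioi, Measure.restrict_restrict measurableSet_Ioi,
      Ioi_inter_Ioo, max_eq_left hs.1.le]
  calc ∫ t in Ioo a b, ∫ s in Ioo a t, K t s
      = ∫ t in Ioo a b, ∫ s in Ioo a b, K' t s :=
        setIntegral_congr_fun measurableSet_Ioo fun t ht => (hinner_s t ht).symm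
    _ = ∫ s in Ioo a b, ∫ t in Ioo a b, K' t s := integral_integral_swap hK'
    _ = ∫ s in Ioo a b, ∫ t in Ioo s b, K t s :=
        setIntegral_congr_fun measurableSet_Ioo hinner_t

theorem intervalIntegral_eq_integral_Ioo {E : Type*} [NormedAddCommGroup E] [NormedSpace ℝ E]
    {a b : ℝ} (hab : a ≤ b) (f : ℝ → E) : ∫ t in a..b, f t = ∫ t in Ioo a b, f t := by
  rw [intervalIntegral.integral_of_le hab, integral_Ioc_eq_integral_Ioo]

section Primitive

variable {H : Type*} [NormedAddCommGroup H] [InnerProductSpace ℝ H] {T : ℝ}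

theorem integrableOn_inner_primitive (hT : 0 ≤ T) {f g : ℝ → H} (hf : IntegrableOn f (Ioo 0 T))
    (hg : IntegrableOn g (Ioo 0 T)) :
    IntegrableOn (fun t => ⟪g t, ∫ s in (0:ℝ)..t, f s⟫) (Ioo 0 T) := by
  have hF : ContinuousOn (fun t => ∫ s in (0:ℝ)..t, f s) (Icc 0 T) := by
    simpa only [uIcc_of_le hT] using intervalIntegral.continuousOn_primitive_interval'
      ((intervalIntegrable_iff_integrableOn_Ioo_of_le hT).2 hf) left_mem_uIcc
  obtain ⟨C, hC⟩ := isCompact_Icc.exists_bound_of_continuousOn hF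
  exact (hg.norm.mul_const C).mono'
    (hg.aestronglyMeasurable.inner
      ((hF.mono Ioo_subset_Icc_self).aestronglyMeasurable measurableSet_Ioo))
    ((ae_restrict_mem measurableSet_Ioo).mono fun t ht => (norm_inner_le_norm _ _).trans
      (mul_le_mul_of_nonneg_left (hC t (Ioo_subset_Icc_self ht)) (norm_nonneg _)))

theorem integral_inner_primitive_eq [CompleteSpace H] {A : H →L[ℝ] H}
    (hA : (A : H →ₗ[ℝ] H).IsSymmetric) (hT : 0 ≤ T) {f : ℝ → H} (hf : IntegrableOn f (Ioo 0 T)) :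
    ∫ t in Ioo 0 T, ⟪A (f t), ∫ s in (0:ℝ)..t, f s⟫ =
      ⟪A (∫ s in (0:ℝ)..T, f s), ∫ s in (0:ℝ)..T, f s⟫ / 2 := by
  set F : ℝ → H := fun t => ∫ s in (0:ℝ)..t, f s
  set J := ∫ t in Ioo 0 T, ⟪A (f t), F t⟫
  have hAf : IntegrableOn (fun t => A (f t)) (Ioo 0 T) := A.integrable_comp hf
  have hkernel : Integrable (Function.uncurry fun t s => ⟪A (f t), f s⟫)
      ((volume.restrict (Ioo 0 T)).prod (volume.restrict (Ioo 0 T))) :=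
    (hAf.norm.mul_prod hf.norm).mono'
      (hAf.aestronglyMeasurable.comp_fst.inner hf.aestronglyMeasurable.comp_snd)
      (Eventually.of_forall fun _ => norm_inner_le_norm _ _)
  have hF_sub : ∀ s ∈ Ioo 0 T, ∫ t in Ioo s T, f t = F T - F s := fun s hs => by
    rw [← intervalIntegral_eq_integral_Ioo hs.2.le, intervalIntegral.integral_interval_sub_left
      ((intervalIntegrable_iff_integrableOn_Ioo_of_le hT).2 hf)
      ((intervalIntegrable_iff_integrableOn_Ioo_of_le hs.1.le).2
        (hf.mono_set (Ioo_subset_Ioo_right hs.2.le)))]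
  have hJ : J = ⟪A (F T), F T⟫ - J := calc
    J = ∫ t in Ioo 0 T, ∫ s in Ioo 0 t, ⟪A (f t), f s⟫ :=
        setIntegral_congr_fun measurableSet_Ioo fun t ht => by
          simp only [F]
          rw [intervalIntegral_eq_integral_Ioo ht.1.le,
            integral_inner (hf.mono_set (Ioo_subset_Ioo_right ht.2.le))]
    _ = ∫ s in Ioo 0 T, ∫ t in Ioo s T, ⟪A (f t), f s⟫ :=
        integral_integral_Ioo_swap_triangle hkernel
    _ = ∫ s in Ioo 0 T, (⟪A (F T), f s⟫ - ⟪A (f s), F s⟫) :=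
        setIntegral_congr_fun measurableSet_Ioo fun s hs => by
          simp_rw [real_inner_comm (f s)]
          rw [integral_inner (hAf.mono_set (Ioo_subset_Ioo_left hs.1.le)),
            A.integral_comp_comm (hf.mono_set (Ioo_subset_Ioo_left hs.1.le)), hF_sub s hs,
            map_sub, inner_sub_right]
          exact congrArg _ (hA (f s) (F s)).symm
    _ = ⟪A (F T), F T⟫ - J := by
        rw [integral_sub (hf.const_inner _) (integrableOn_inner_primitive hT hf hAf),
          integral_inner hf, ← intervalIntegral_eq_integral_Ioo hT]
  linarith

end Primitive

section Curve

variable {H : Type*} [NormedAddCommGroup H] [InnerProductSpace ℝ H] [CompleteSpace H]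
  {T : ℝ} {σ σ' : ℝ → H}

theorem isH1Curve_const_add_primitive {f : ℝ → H} (hf : MemLp f 2 (volume.restrict (Ioo 0 T)))
    (x₀ : H) : IsH1Curve T (fun t => x₀ + ∫ s in (0:ℝ)..t, f s) f :=
  ⟨hf, fun t _ => by simp⟩

namespace IsH1Curve

theorem integrable (h : IsH1Curve T σ σ') : Integrable σ' (volume.restrict (Ioo 0 T)) :=
  h.1.integrable one_le_two

theorem intervalIntegrable (h : IsH1Curve T σ σ') {t : ℝ} (ht : t ∈ Icc 0 T) :
    IntervalIntegrable σ' volume 0 t :=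
  (intervalIntegrable_iff_integrableOn_Ioo_of_le ht.1).2
    (IntegrableOn.mono_set h.integrable (Ioo_subset_Ioo_right ht.2))

theorem continuousOn (h : IsH1Curve T σ σ') : ContinuousOn σ (Icc 0 T) := by
  intro t ht
  have hprim := intervalIntegral.continuousOn_primitive_interval'
    (h.intervalIntegrable (right_mem_Icc.2 (ht.1.trans ht.2))) left_mem_uIcc
  rw [uIcc_of_le (ht.1.trans ht.2)] at hprim
  exact ((continuousOn_const.add hprim).congr h.2 t ht)

theorem norm_le (h : IsH1Curve T σ σ') {t : ℝ} (ht : t ∈ Icc 0 T) :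
    ‖σ t‖ ≤ ‖σ 0‖ + √T * √(∫ s in Ioo 0 T, ‖σ' s‖ ^ 2) := by
  have hT : 0 ≤ T := ht.1.trans ht.2
  rw [h.2 t ht]
  refine (norm_add_le _ _).trans ?_
  gcongr
  calc ‖∫ s in (0:ℝ)..t, σ' s‖
      ≤ ∫ s in Ioo 0 t, ‖σ' s‖ := by
        rw [intervalIntegral_eq_integral_Ioo ht.1]
        exact norm_integral_le_integral_norm _
    _ ≤ ∫ s in Ioo 0 T, ‖σ' s‖ :=
        setIntegral_mono_set h.integrable.norm (Eventually.of_forall fun _ => norm_nonneg _)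
          (Ioo_subset_Ioo_right ht.2).eventuallyLE
    _ ≤ √T * √(∫ s in Ioo 0 T, ‖σ' s‖ ^ 2) := by
        simpa [hT] using integral_norm_le_sqrt_mul_sqrt h.1

theorem memLp (h : IsH1Curve T σ σ') : MemLp σ 2 (volume.restrict (Ioo 0 T)) :=
  .of_bound ((h.continuousOn.mono Ioo_subset_Icc_self).aestronglyMeasurable measurableSet_Ioo) _
    ((ae_restrict_mem measurableSet_Ioo).mono fun _ ht => h.norm_le (Ioo_subset_Icc_self ht))

theorem inner_apply_eq (h : IsH1Curve T σ σ') {t : ℝ} (ht : t ∈ Icc 0 T) (y : H) :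
    ⟪σ t, y⟫ = ⟪σ 0, y⟫ + ∫ s in Ioo 0 T, ⟪σ' s, (Ioo 0 t).indicator (fun _ => y) s⟫ := by
  have hind : ∀ s, ⟪σ' s, (Ioo 0 t).indicator (fun _ => y) s⟫ =
      (Ioo 0 t).indicator (fun s => ⟪y, σ' s⟫) s := fun s => by
    by_cases hs : s ∈ Ioo 0 t <;> simp [hs, real_inner_comm]
  simp_rw [hind]
  rw [integral_indicator measurableSet_Ioo, Measure.restrict_restrict measurableSet_Ioo,
    inter_eq_left.2 (Ioo_subset_Ioo_right ht.2),
    integral_inner (IntegrableOn.mono_set h.integrable (Ioo_subset_Ioo_right ht.2)),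
    ← intervalIntegral_eq_integral_Ioo ht.1, h.2 t ht, inner_add_left,
    real_inner_comm (∫ s in (0:ℝ)..t, σ' s) y]

theorem integral_inner_map_deriv_eq (h : IsH1Curve T σ σ') (hT : 0 ≤ T) {A : H →L[ℝ] H}
    (hA : (A : H →ₗ[ℝ] H).IsSymmetric) :
    ∫ t in Ioo 0 T, ⟪A (σ' t), σ t⟫ = (⟪A (σ T), σ T⟫ - ⟪A (σ 0), σ 0⟫) / 2 := by
  have hAσ' : IntegrableOn (fun t => A (σ' t)) (Ioo 0 T) := A.integrable_comp h.integrable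
  have hsplit : ∫ t in Ioo 0 T, ⟪A (σ' t), σ t⟫ =
      ∫ t in Ioo 0 T, (⟪A (σ' t), σ 0⟫ + ⟪A (σ' t), ∫ s in (0:ℝ)..t, σ' s⟫) := by
    refine setIntegral_congr_fun measurableSet_Ioo fun t ht => ?_
    rw [h.2 t (Ioo_subset_Icc_self ht), inner_add_right]
  have hlin : ∫ t in Ioo 0 T, ⟪A (σ' t), σ 0⟫ = ⟪A (∫ s in (0:ℝ)..T, σ' s), σ 0⟫ := by
    simp_rw [real_inner_comm (σ 0)]
    rw [integral_inner hAσ', intervalIntegral_eq_integral_Ioo hT, A.integral_comp_comm h.integrable]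
  rw [hsplit, integral_add (hAσ'.inner_const _)
    (integrableOn_inner_primitive hT h.integrable hAσ'), hlin,
    integral_inner_primitive_eq hA hT h.integrable, h.2 T (right_mem_Icc.2 hT)]
  have hsym := hA (σ 0) (∫ s in (0:ℝ)..T, σ' s)
  simp only [ContinuousLinearMap.coe_coe] at hsym
  simp only [map_add, inner_add_left, inner_add_right, hsym, real_inner_comm (σ 0)]
  ring

theorem integral_inner_sub_eq (h : IsH1Curve T σ σ') (hT : 0 ≤ T) {A : H →L[ℝ] H}
    (hA : (A : H →ₗ[ℝ] H).IsSymmetric) {g τ : ℝ → H} (hg : MemLp g 2 (volume.restrict (Ioo 0 T)))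
    (hτ : MemLp τ 2 (volume.restrict (Ioo 0 T))) :
    ∫ t in Ioo 0 T, ⟪A (σ' t) - g t, τ t - σ t⟫ =
      (∫ t in Ioo 0 T, ⟪σ' t, A (τ t)⟫) - (∫ t in Ioo 0 T, ⟪g t, τ t⟫) +
        (∫ t in Ioo 0 T, ⟪g t, σ t⟫) - (⟪A (σ T), σ T⟫ - ⟪A (σ 0), σ 0⟫) / 2 := by
  have hAτ : MemLp (fun t => A (τ t)) 2 (volume.restrict (Ioo 0 T)) := A.comp_memLp' hτ
  have hAσ' : MemLp (fun t => A (σ' t)) 2 (volume.restrict (Ioo 0 T)) := A.comp_memLp' h.1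
  have i1 := h.1.integrable_inner hAτ
  have i2 := hg.integrable_inner hτ
  have i3 := hg.integrable_inner h.memLp
  have i4 := hAσ'.integrable_inner h.memLp
  have hpt : ∀ t, ⟪A (σ' t) - g t, τ t - σ t⟫ =
      ⟪σ' t, A (τ t)⟫ - ⟪g t, τ t⟫ + ⟪g t, σ t⟫ - ⟪A (σ' t), σ t⟫ := fun t => by
    have hsym : ⟪A (σ' t), τ t⟫ = ⟪σ' t, A (τ t)⟫ := hA _ _
    rw [inner_sub_left, inner_sub_right, inner_sub_right, hsym]
    ring
  simp_rw [hpt]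
  rw [integral_sub ?_ i4, integral_add ?_ i3, integral_sub i1 i2,
    h.integral_inner_map_deriv_eq hT hA]
  · exact i1.sub i2
  · exact (i1.sub i2).add i3

theorem tendsto_inner_apply {σ σ' : ℕ → ℝ → H} {σlim σ'lim : ℝ → H}
    (hlim : IsH1Curve T σlim σ'lim) (hσ : ∀ n, IsH1Curve T (σ n) (σ' n))
    (h0 : ∀ n, σ n 0 = σlim 0) (hw : WeaklyTendstoL2 (volume.restrict (Ioo 0 T)) σ' σ'lim) :
    ∀ t ∈ Icc 0 T, ∀ y, Tendsto (fun n => ⟪σ n t, y⟫) atTop (𝓝 ⟪σlim t, y⟫) := by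
  intro t ht y
  have hσt : ∀ n, ⟪σ n t, y⟫ = ⟪σlim 0, y⟫ +
      ∫ s in Ioo 0 T, ⟪σ' n s, (Ioo 0 t).indicator (fun _ => y) s⟫ := fun n => by
    rw [(hσ n).inner_apply_eq ht, h0]
  simp_rw [hσt, hlim.inner_apply_eq ht]
  exact tendsto_const_nhds.add (hw _ ((memLp_const y).indicator measurableSet_Ioo))

theorem weaklyTendstoL2 {σ σ' : ℕ → ℝ → H} {σlim σ'lim : ℝ → H}
    (hlim : IsH1Curve T σlim σ'lim) (hσ : ∀ n, IsH1Curve T (σ n) (σ' n))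
    (h0 : ∀ n, σ n 0 = σlim 0) (hw : WeaklyTendstoL2 (volume.restrict (Ioo 0 T)) σ' σ'lim) :
    WeaklyTendstoL2 (volume.restrict (Ioo 0 T)) σ σlim := by
  obtain ⟨C, hC⟩ := hw.exists_integral_norm_sq_le fun n => (hσ n).1
  refine .of_ae_tendsto_inner (B := ‖σlim 0‖ + √T * √C)
    (fun n => (hσ n).memLp.aestronglyMeasurable) (fun n => ?_) ?_
  · filter_upwards [ae_restrict_mem measurableSet_Ioo] with t ht
    refine ((hσ n).norm_le (Ioo_subset_Icc_self ht)).trans ?_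
    rw [h0 n]
    gcongr
    exact hC n
  · filter_upwards [ae_restrict_mem measurableSet_Ioo] with t ht
    exact hlim.tendsto_inner_apply hσ h0 hw t (Ioo_subset_Icc_self ht)

theorem integral_inner_sub_nonneg_of_tendsto {σ σ' : ℕ → ℝ → H} {σlim σ'lim : ℝ → H}
    (hlim : IsH1Curve T σlim σ'lim) (hσ : ∀ n, IsH1Curve T (σ n) (σ' n))
    (h0 : ∀ n, σ n 0 = σlim 0) (hw : WeaklyTendstoL2 (volume.restrict (Ioo 0 T)) σ' σ'lim)
    (hT : 0 ≤ T) {A : H →L[ℝ] H} (hA : A.IsPositive) {g : ℕ → ℝ → H} {glim : ℝ → H}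
    (hg : ∀ n, MemLp (g n) 2 (volume.restrict (Ioo 0 T)))
    (hglim : MemLp glim 2 (volume.restrict (Ioo 0 T)))
    (hgs : Tendsto (fun n => ∫ t in Ioo 0 T, ‖g n t - glim t‖ ^ 2) atTop (𝓝 0))
    {τ : ℝ → H} (hτ : MemLp τ 2 (volume.restrict (Ioo 0 T)))
    (hvi : ∀ n, 0 ≤ ∫ t in Ioo 0 T, ⟪A (σ' n t) - g n t, τ t - σ n t⟫) :
    0 ≤ ∫ t in Ioo 0 T, ⟪A (σ'lim t) - glim t, τ t - σlim t⟫ := by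
  have hAτ : MemLp (fun t => A (τ t)) 2 (volume.restrict (Ioo 0 T)) := A.comp_memLp' hτ
  have hτweak : WeaklyTendstoL2 (volume.restrict (Ioo 0 T)) (fun _ => τ) τ :=
    fun _ _ => tendsto_const_nhds
  have hI1 := hw _ hAτ
  have hI2 := hτweak.tendsto_integral_inner_of_tendsto (fun _ => hτ) hg hglim hgs
  have hI3 := (hlim.weaklyTendstoL2 hσ h0 hw).tendsto_integral_inner_of_tendsto
    (fun n => (hσ n).memLp) hg hglim hgs
  have hIT := hlim.tendsto_inner_apply hσ h0 hw T (right_mem_Icc.2 hT) (A (σlim T))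
  have hI4 := (((hIT.const_mul 2).sub_const ⟪A (σlim T), σlim T⟫).sub_const
    ⟪A (σlim 0), σlim 0⟫).div_const 2
  -- `⟪A (σ n T), σ n T⟫` is bounded below by an affine function of the weakly convergent `σ n T`
  have hlower := ge_of_tendsto' (b := 0) (((hI1.sub hI2).add hI3).sub hI4) fun n => by
    have hvin := hvi n
    rw [(hσ n).integral_inner_sub_eq hT hA.isSymmetric (hg n) hτ, h0 n] at hvin
    linarith [hA.two_mul_inner_sub_le (σ n T) (σlim T)]
  rw [hlim.integral_inner_sub_eq hT hA.isSymmetric hglim hτ]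
  linarith [real_inner_comm (σlim T) (A (σlim T))]

end IsH1Curve

end Curve

theorem reduced_solution_weakly_closed_general
    {H : Type*} [NormedAddCommGroup H] [InnerProductSpace ℝ H] [CompleteSpace H]
    (𝒞 : Set H) (h𝒞closed : IsClosed 𝒞) (h𝒞conv : Convex ℝ 𝒞)
    (A : H →L[ℝ] H) (hAsym : ∀ x y, ⟪A x, y⟫ = ⟪x, A y⟫)
    (γ : ℝ) (hγ : 0 < γ) (hAcoer : ∀ h : H, γ * ‖h‖ ^ 2 ≤ ⟪A h, h⟫)
    (T : ℝ) (hT : 0 < T) (σ₀ : H)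
    (g : ℕ → ℝ → H) (glim : ℝ → H)
    (hg : ∀ n, MemLp (g n) 2 (volume.restrict (Set.Ioo 0 T)))
    (hglim : MemLp glim 2 (volume.restrict (Set.Ioo 0 T)))
    (hgstrong : Filter.Tendsto (fun n => ∫ t in (0:ℝ)..T, ‖g n t - glim t‖ ^ 2)
      Filter.atTop (nhds 0))
    (σ σ' : ℕ → ℝ → H) (v : ℝ → H)
    (hσ : ∀ n, IsH1Curve T (σ n) (σ' n)) (hinit : ∀ n, σ n 0 = σ₀)
    (hv : MemLp v 2 (volume.restrict (Set.Ioo 0 T)))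
    (hweak : ∀ h : ℝ → H, MemLp h 2 (volume.restrict (Set.Ioo 0 T)) →
      Filter.Tendsto (fun n => ∫ t in (0:ℝ)..T, ⟪σ' n t, h t⟫) Filter.atTop
        (nhds (∫ t in (0:ℝ)..T, ⟪v t, h t⟫)))
    (hfeas : ∀ n, ∀ᵐ t ∂(volume.restrict (Set.Ioo 0 T)), σ n t ∈ 𝒞)
    (hvi : ∀ n, ∀ τ : ℝ → H, MemLp τ 2 (volume.restrict (Set.Ioo 0 T)) →
      (∀ᵐ t ∂(volume.restrict (Set.Ioo 0 T)), τ t ∈ 𝒞) →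
      0 ≤ ∫ t in (0:ℝ)..T, ⟪A (σ' n t) - g n t, τ t - σ n t⟫) :
    (∀ᵐ t ∂(volume.restrict (Set.Ioo 0 T)),
        σ₀ + (∫ s in (0:ℝ)..t, v s) ∈ 𝒞) ∧
      ∀ τ : ℝ → H, MemLp τ 2 (volume.restrict (Set.Ioo 0 T)) →
        (∀ᵐ t ∂(volume.restrict (Set.Ioo 0 T)), τ t ∈ 𝒞) →
        0 ≤ ∫ t in (0:ℝ)..T,
          ⟪A (v t) - glim t, τ t - (σ₀ + ∫ s in (0:ℝ)..t, v s)⟫ := by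
  have hσ'weak : WeaklyTendstoL2 (volume.restrict (Ioo 0 T)) σ' v := fun h hh => by
    simpa only [intervalIntegral_eq_integral_Ioo hT.le] using hweak h hh
  set σlim : ℝ → H := fun t => σ₀ + ∫ s in (0:ℝ)..t, v s
  have hσlim : IsH1Curve T σlim v := isH1Curve_const_add_primitive hv σ₀
  have h0 : ∀ n, σ n 0 = σlim 0 := fun n => by simp [σlim, hinit n]
  refine ⟨?_, fun τ hτ hτC => ?_⟩
  · filter_upwards [ae_restrict_mem measurableSet_Ioo, ae_all_iff.2 hfeas] with t ht hmem
    exact h𝒞conv.mem_of_tendsto_inner h𝒞closed hmem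
      (hσlim.tendsto_inner_apply hσ h0 hσ'weak t (Ioo_subset_Icc_self ht))
  have hApos : A.IsPositive :=
    ⟨hAsym, fun h => (by positivity : 0 ≤ γ * ‖h‖ ^ 2).trans (hAcoer h)⟩
  rw [intervalIntegral_eq_integral_Ioo hT.le]
  refine hσlim.integral_inner_sub_nonneg_of_tendsto hσ h0 hσ'weak hT.le hApos hg hglim ?_ hτ
    fun n => ?_
  · simpa only [intervalIntegral_eq_integral_Ioo hT.le] using hgstrong
  · simpa only [intervalIntegral_eq_integral_Ioo hT.le] using hvi n τ hτ hτC

/-- Weak closedness of reduced solutions of the quasi-static evolution variational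
inequality: if `gₙ → g` strongly in `L²(0,T;H)`, the derivatives `σₙ'` converge
weakly in `L²(0,T;H)` to `v`, all `σₙ` start at `σ₀` and solve the time-integrated
variational inequality, then `σ(t) := σ₀ + ∫₀ᵗ v` solves it as well. -/
theorem reduced_solution_weakly_closed
    {H : Type*} [NormedAddCommGroup H] [InnerProductSpace ℝ H] [CompleteSpace H]
    (𝒞 : Set H) (h𝒞 : 𝒞.Nonempty) (h𝒞closed : IsClosed 𝒞) (h𝒞conv : Convex ℝ 𝒞)
    (A : H →L[ℝ] H) (hAsym : ∀ x y, ⟪A x, y⟫ = ⟪x, A y⟫)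
    (γ : ℝ) (hγ : 0 < γ) (hAcoer : ∀ h : H, γ * ‖h‖ ^ 2 ≤ ⟪A h, h⟫)
    (T : ℝ) (hT : 0 < T) (σ₀ : H)
    (g : ℕ → ℝ → H) (glim : ℝ → H)
    (hg : ∀ n, MemLp (g n) 2 (volume.restrict (Set.Ioo 0 T)))
    (hglim : MemLp glim 2 (volume.restrict (Set.Ioo 0 T)))
    (hgstrong : Filter.Tendsto (fun n => ∫ t in (0:ℝ)..T, ‖g n t - glim t‖ ^ 2)
      Filter.atTop (nhds 0))
    (σ σ' : ℕ → ℝ → H) (v : ℝ → H)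
    (hσ : ∀ n, IsH1Curve T (σ n) (σ' n)) (hinit : ∀ n, σ n 0 = σ₀)
    (hv : MemLp v 2 (volume.restrict (Set.Ioo 0 T)))
    (hweak : ∀ h : ℝ → H, MemLp h 2 (volume.restrict (Set.Ioo 0 T)) →
      Filter.Tendsto (fun n => ∫ t in (0:ℝ)..T, ⟪σ' n t, h t⟫) Filter.atTop
        (nhds (∫ t in (0:ℝ)..T, ⟪v t, h t⟫)))
    (hfeas : ∀ n, ∀ᵐ t ∂(volume.restrict (Set.Ioo 0 T)), σ n t ∈ 𝒞)
    (hvi : ∀ n, ∀ τ : ℝ → H, MemLp τ 2 (volume.restrict (Set.Ioo 0 T)) →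
      (∀ᵐ t ∂(volume.restrict (Set.Ioo 0 T)), τ t ∈ 𝒞) →
      0 ≤ ∫ t in (0:ℝ)..T, ⟪A (σ' n t) - g n t, τ t - σ n t⟫) :
    (∀ᵐ t ∂(volume.restrict (Set.Ioo 0 T)),
        σ₀ + (∫ s in (0:ℝ)..t, v s) ∈ 𝒞) ∧
      ∀ τ : ℝ → H, MemLp τ 2 (volume.restrict (Set.Ioo 0 T)) →
        (∀ᵐ t ∂(volume.restrict (Set.Ioo 0 T)), τ t ∈ 𝒞) →
        0 ≤ ∫ t in (0:ℝ)..T,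
          ⟪A (v t) - glim t, τ t - (σ₀ + ∫ s in (0:ℝ)..t, v s)⟫ :=
  reduced_solution_weakly_closed_general 𝒞 h𝒞closed h𝒞conv A hAsym γ hγ hAcoer T hT σ₀ g glim hg
    hglim hgstrong σ σ' v hσ hinit hv hweak hfeas hvi
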